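/- arXiv:1506.06727 — 3 statements merged into one kernel-verified Lean document; each statement's English description precedes it below -/
import Mathlib

section
/- Suppose G : (0,∞) → ℝ is smooth with w = G' > 0, satisfying (A1): d·w'(d) + (1 - 1/n)·w(d) ≤ 0 for all d > 0, and (A2): d·w(d) ≥ c > 0 for all d ≥ 1. Then for all d ≥ 1, G(d) − d·G'(d) ≥ G(1) − w(1) + c·(1 − 1/n)·log d. In particular, if n ≥ 2, G(d) − d·G'(d) → ∞ as d → ∞ (condition (B2)). -/
open Filter

/-!
Since `(G - d·G')' = -d·w'`, (A1) and (A2) give `(G - d·G')'(d) ≥ (1 - 1/n)·w(d) ≥ c(1 - 1/n)/d`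
for `d ≥ 1`, so `G - d·G'` grows at least like `c(1 - 1/n)·log d` from its value at `1`.
-/

theorem hasDerivAt_sub_mul_self {G w : ℝ → ℝ} {w' d : ℝ} (hG : HasDerivAt G (w d) d)
    (hw : HasDerivAt w w' d) : HasDerivAt (fun x => G x - x * w x) (-(d * w')) d :=
  (hG.sub ((hasDerivAt_id d).mul hw)).congr_deriv (by simp only [id]; ring)

theorem add_mul_log_le_of_hasDerivAt {f f' : ℝ → ℝ} {κ d : ℝ}
    (hf : ∀ x, 1 ≤ x → HasDerivAt f (f' x) x) (hf' : ∀ x, 1 < x → κ / x ≤ f' x) (hd : 1 ≤ d) :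
    f 1 + κ * Real.log d ≤ f d := by
  have hderiv : ∀ x, 1 ≤ x → HasDerivAt (fun x => f x - κ * Real.log x) (f' x - κ / x) x :=
    fun x hx =>
      ((hf x hx).sub ((Real.hasDerivAt_log (by linarith)).const_mul κ)).congr_deriv
        (by rw [div_eq_mul_inv])
  have hmono : MonotoneOn (fun x => f x - κ * Real.log x) (Set.Ici 1) := by
    refine monotoneOn_of_hasDerivWithinAt_nonneg (f' := fun x => f' x - κ / x) (convex_Ici 1)
      (fun x hx => (hderiv x hx).continuousAt.continuousWithinAt) (fun x hx => ?_) fun x hx => ?_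
    all_goals rw [interior_Ici] at hx
    · exact (hderiv x (le_of_lt hx)).hasDerivWithinAt
    · exact sub_nonneg.2 (hf' x hx)
  have := hmono Set.self_mem_Ici hd hd
  simp only [Real.log_one, mul_zero, sub_zero] at this
  linarith

theorem tendsto_atTop_of_add_mul_log_le {f : ℝ → ℝ} {a κ : ℝ} (hκ : 0 < κ)
    (hf : ∀ d, 1 ≤ d → a + κ * Real.log d ≤ f d) : Tendsto f atTop atTop :=
  tendsto_atTop_mono' _ ((eventually_ge_atTop 1).mono hf)
    (tendsto_atTop_add_const_left _ a (Real.tendsto_log_atTop.const_mul_atTop hκ))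

theorem stmt_1_general (n : ℕ) (hn : 2 ≤ n) (c : ℝ) (hc : 0 < c) (G w w' : ℝ → ℝ)
    (hG : ∀ d ∈ Set.Ioi (0:ℝ), HasDerivAt G (w d) d)
    (hw : ∀ d ∈ Set.Ioi (0:ℝ), HasDerivAt w (w' d) d)
    (hA1 : ∀ d ∈ Set.Ioi (0:ℝ), d * w' d + (1 - 1/(n:ℝ)) * w d ≤ 0)
    (hA2 : ∀ d : ℝ, 1 ≤ d → c ≤ d * w d) :
    (∀ d : ℝ, 1 ≤ d →
      G 1 - w 1 + c * (1 - 1/(n:ℝ)) * Real.log d ≤ G d - d * w d) ∧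
    Tendsto (fun d => G d - d * w d) atTop atTop := by
  have hexp : 0 < 1 - 1/(n:ℝ) := by
    have : (1:ℝ)/n ≤ 1/2 := one_div_le_one_div_of_le two_pos (by exact_mod_cast hn)
    linarith
  have hderiv : ∀ d, 1 ≤ d → HasDerivAt (fun x => G x - x * w x) (-(d * w' d)) d :=
    fun d hd => hasDerivAt_sub_mul_self (hG d (Set.mem_Ioi.2 (by linarith)))
      (hw d (Set.mem_Ioi.2 (by linarith)))
  have hderiv_ge : ∀ d, 1 < d → c * (1 - 1/(n:ℝ)) / d ≤ -(d * w' d) := by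
    intro d hd
    have hd0 : 0 < d := by linarith
    calc c * (1 - 1/(n:ℝ)) / d
        ≤ d * w d * (1 - 1/(n:ℝ)) / d := by gcongr; exact hA2 d hd.le
      _ = (1 - 1/(n:ℝ)) * w d := by field_simp
      _ ≤ -(d * w' d) := by linarith [hA1 d hd0]
  have hlog : ∀ d, 1 ≤ d → G 1 - w 1 + c * (1 - 1/(n:ℝ)) * Real.log d ≤ G d - d * w d :=
    fun d hd => by simpa using add_mul_log_le_of_hasDerivAt hderiv hderiv_ge hd
  exact ⟨hlog, tendsto_atTop_of_add_mul_log_le (mul_pos hc hexp) hlog⟩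

/-- Under (A1) and (A2), `G(d) - d·G'(d) ≥ G(1) - w(1) + c(1-1/n)·log d` for `d ≥ 1`;
in particular the coercivity condition (B2) holds. -/
theorem stmt_1 (n : ℕ) (hn : 2 ≤ n) (c : ℝ) (hc : 0 < c) (G w w' : ℝ → ℝ)
    (hG : ∀ d ∈ Set.Ioi (0:ℝ), HasDerivAt G (w d) d)
    (hw : ∀ d ∈ Set.Ioi (0:ℝ), HasDerivAt w (w' d) d)
    (hwpos : ∀ d ∈ Set.Ioi (0:ℝ), 0 < w d)
    (hA1 : ∀ d ∈ Set.Ioi (0:ℝ), d * w' d + (1 - 1/(n:ℝ)) * w d ≤ 0)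
    (hA2 : ∀ d : ℝ, 1 ≤ d → c ≤ d * w d) :
    (∀ d : ℝ, 1 ≤ d →
      G 1 - w 1 + c * (1 - 1/(n:ℝ)) * Real.log d ≤ G d - d * w d) ∧
    Tendsto (fun d => G d - d * w d) atTop atTop :=
  stmt_1_general n hn c hc G w w' hG hw hA1 hA2
end

section
/- The function G(d) = (log d)/(log log(d + e^{e^{4n}})) defined on (0,∞) satisfies the coercivity condition (B2): G(d) − d·G'(d) → ∞ as d → ∞. -/
/-!
With `L(d) = log log (d + c)` one computes
`G - d G' = (log d - 1) / L + d log d / ((d + c) log (d + c) L²)`.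
The second term is nonnegative, and for `d ≥ c` the first is at least `(v - 2) / log v` with
`v = log (d + c) → ∞`; this tends to `∞` because `log v = o(v)`.
-/

open Filter Real Topology

theorem tendsto_div_log_atTop : Tendsto (fun v : ℝ => v / log v) atTop atTop := by
  have hpos : ∀ᶠ v : ℝ in atTop, 0 < log v / id v := by
    filter_upwards [eventually_gt_atTop 1] with v hv
    exact div_pos (log_pos hv) (by simp; linarith)
  convert (tendsto_nhdsWithin_of_tendsto_nhds_of_eventually_within _
    isLittleO_log_id_atTop.tendsto_div_nhds_zero hpos).inv_tendsto_nhdsGT_zero using 1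
  ext v
  simp

theorem tendsto_sub_div_log_atTop (a : ℝ) :
    Tendsto (fun v : ℝ => (v - a) / log v) atTop atTop := by
  convert tendsto_div_log_atTop.atTop_add ((tendsto_log_atTop.const_div_atTop a).neg) using 2
  ring

section LogDivLogLogAdd

variable {c d : ℝ}

theorem hasDerivAt_log_div_log_log_add (hd : d ≠ 0) (hdc : exp 1 < d + c) :
    HasDerivAt (fun x => log x / log (log (x + c)))
      (1 / (d * log (log (d + c))) -
        log d / ((d + c) * log (d + c) * log (log (d + c)) ^ 2)) d := by
  have hdc₀ : 0 < d + c := (exp_pos 1).trans hdc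
  have hlog : 1 < log (d + c) := (lt_log_iff_exp_lt hdc₀).2 hdc
  have hL : log (log (d + c)) ≠ 0 := (log_pos hlog).ne'
  have hinner : HasDerivAt (fun x => log (x + c)) (1 / (d + c)) d := by
    simpa using ((hasDerivAt_id d).add_const c).log hdc₀.ne'
  refine ((hasDerivAt_log hd).div (hinner.log (by positivity)) hL).congr_deriv ?_
  field_simp

theorem sub_one_div_le_log_div_log_log_add_sub_mul (hd : 1 ≤ d) (hdc : exp 1 < d + c) :
    (log d - 1) / log (log (d + c)) ≤ log d / log (log (d + c)) - d *
      (1 / (d * log (log (d + c))) -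
        log d / ((d + c) * log (d + c) * log (log (d + c)) ^ 2)) := by
  have hdc₀ : 0 < d + c := (exp_pos 1).trans hdc
  have hlog : 1 < log (d + c) := (lt_log_iff_exp_lt hdc₀).2 hdc
  have hrest : 0 ≤ d * log d / ((d + c) * log (d + c) * log (log (d + c)) ^ 2) := by
    have := log_nonneg hd
    positivity
  calc (log d - 1) / log (log (d + c))
      ≤ (log d - 1) / log (log (d + c)) +
          d * log d / ((d + c) * log (d + c) * log (log (d + c)) ^ 2) := by linarith
    _ = _ := by field_simp; ring

theorem log_add_sub_two_le (hd : 0 < d) (hcd : c ≤ d) (hdc : 0 < d + c) :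
    log (d + c) - 2 ≤ log d - 1 := by
  have : log (d + c) ≤ log 2 + log d := by
    rw [← log_mul two_ne_zero hd.ne']
    exact log_le_log hdc (by linarith)
  linarith [log_two_lt_d9]

end LogDivLogLogAdd

theorem tendsto_log_div_log_log_add_sub_mul_deriv_atTop (c : ℝ) (G : ℝ → ℝ)
    (hG : ∀ d : ℝ, 0 < d → G d = log d / log (log (d + c))) :
    Tendsto (fun d : ℝ => G d - d * deriv G d) atTop atTop := by
  have hlim : Tendsto (fun d => (log (d + c) - 2) / log (log (d + c))) atTop atTop :=
    (tendsto_sub_div_log_atTop 2).comp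
      (tendsto_log_atTop.comp (tendsto_atTop_add_const_right _ c tendsto_id))
  refine tendsto_atTop_mono' _ ?_ hlim
  filter_upwards [eventually_ge_atTop 1, eventually_ge_atTop c, eventually_gt_atTop (exp 1 - c)]
    with d hd hcd hdc
  have hdc' : exp 1 < d + c := by linarith
  have hd₀ : 0 < d := by linarith
  have hdc₀ : 0 < d + c := (exp_pos 1).trans hdc'
  have hL : 0 < log (log (d + c)) := log_pos ((lt_log_iff_exp_lt hdc₀).2 hdc')
  have hderiv : deriv G d = _ :=
    ((hasDerivAt_log_div_log_log_add hd₀.ne' hdc').congr_of_eventuallyEq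
      (eventually_gt_nhds hd₀ |>.mono hG)).deriv
  rw [hderiv, hG d hd₀]
  calc (log (d + c) - 2) / log (log (d + c))
      ≤ (log d - 1) / log (log (d + c)) :=
        div_le_div_of_nonneg_right (log_add_sub_two_le hd₀ hcd hdc₀) hL.le
    _ ≤ _ := sub_one_div_le_log_div_log_log_add_sub_mul hd hdc'

theorem stmt_4_general (n : ℕ)
    (G : ℝ → ℝ)
    (hGdef : ∀ d : ℝ, 0 < d →
      G d = Real.log d / Real.log (Real.log (d + Real.exp (Real.exp (4 * (n:ℝ)))))) :
    Tendsto (fun d : ℝ => G d - d * deriv G d) atTop atTop :=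
  tendsto_log_div_log_log_add_sub_mul_deriv_atTop _ G hGdef

/-- `G(d) = log d / log log (d + e^{e^{4n}})` satisfies the coercivity condition (B2). -/
theorem stmt_4 (n : ℕ) (hn : 2 ≤ n)
    (G : ℝ → ℝ)
    (hGdef : ∀ d : ℝ, 0 < d →
      G d = Real.log d / Real.log (Real.log (d + Real.exp (Real.exp (4 * (n:ℝ)))))) :
    Tendsto (fun d : ℝ => G d - d * deriv G d) atTop atTop :=
  stmt_4_general n G hGdef
end

section
/- Let u be a smooth, uniformly convex function on a convex domain Ω ⊂ ℝⁿ and let u*(y) = x·y − u(x) where y = Du(x) be its Legendre transform on Ω* = Du(Ω). If w*(y) := G(1/det D²u*(y)) − (1/det D²u*(y))·G'(1/det D²u*(y)), w(x) := G'(det D²u(x)), and U, U* denote the cofactor matrices of D²u, D²u*, then under y = Du(x): ∂w/∂x_j = −Σ_k (∂w*/∂y_k)·(U*)^{kj}, and if U^{ij}w_{ij} = f(x) in Ω, then (U*)^{ij} w*_{ij} = −f(Du*(y))·det D²u*(y) in Ω*. -/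
/-- The Hessian matrix of a function on Euclidean space. -/
noncomputable def Hess {n : ℕ} (u : EuclideanSpace ℝ (Fin n) → ℝ)
    (x : EuclideanSpace ℝ (Fin n)) : Matrix (Fin n) (Fin n) ℝ :=
  Matrix.of fun i j =>
    fderiv ℝ (fun y => fderiv ℝ u y (EuclideanSpace.single j (1:ℝ))) x
      (EuclideanSpace.single i (1:ℝ))

/-- The cofactor matrix `(det M)·M⁻¹`. -/
noncomputable def cof {n : ℕ} (M : Matrix (Fin n) (Fin n) ℝ) : Matrix (Fin n) (Fin n) ℝ :=
  M.det • M⁻¹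

open EuclideanSpace Matrix

variable {n : ℕ}

abbrev Euc (n : ℕ) := EuclideanSpace ℝ (Fin n)

noncomputable def pd (i : Fin n) (f : Euc n → ℝ) (x : Euc n) : ℝ :=
  fderiv ℝ f x (EuclideanSpace.single i 1)

lemma euclid_sum (v : Euc n) : ∑ i, v i • EuclideanSpace.single i (1:ℝ) = v := by
  ext j
  have := map_sum (EuclideanSpace.proj j (𝕜 := ℝ)) (fun i => v i • EuclideanSpace.single i (1:ℝ)) Finset.univ

  rw [show (∑ i, v i • EuclideanSpace.single i (1:ℝ)) j
      = EuclideanSpace.proj j (𝕜 := ℝ) (∑ i, v i • EuclideanSpace.single i (1:ℝ)) from rfl, this]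
  simp [EuclideanSpace.single_apply]

lemma clm_eval_sum (L : Euc n →L[ℝ] ℝ) (v : Euc n) :
    L v = ∑ i, v i * L (EuclideanSpace.single i 1) := by
  conv_lhs => rw [← euclid_sum v]
  rw [map_sum]
  simp [smul_eq_mul]

lemma toDual_symm_coord (ℓ : Euc n →L[ℝ] ℝ) (i : Fin n) :
    ((InnerProductSpace.toDual ℝ (Euc n)).symm ℓ) i = ℓ (EuclideanSpace.single i 1) := by
  have h : (inner ℝ ((InnerProductSpace.toDual ℝ (Euc n)).symm ℓ)
      (EuclideanSpace.single i (1:ℝ)) : ℝ) = ℓ (EuclideanSpace.single i 1) :=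
    InnerProductSpace.toDual_symm_apply
  rw [← h, EuclideanSpace.inner_single_right]
  simp

lemma gradient_coord (f : Euc n → ℝ) (x : Euc n) (i : Fin n) :
    gradient f x i = pd i f x := toDual_symm_coord _ i

lemma pd_congr {f g : Euc n → ℝ} {s : Set (Euc n)} (hs : IsOpen s)
    (h : ∀ z ∈ s, f z = g z) {x : Euc n} (hx : x ∈ s) (i : Fin n) :
    pd i f x = pd i g x := by
  unfold pd
  rw [Filter.EventuallyEq.fderiv_eq (Filter.eventually_of_mem (hs.mem_nhds hx) h)]

lemma diffAt_of_contDiffOn {m : WithTop ℕ∞} {f : Euc n → ℝ} {s : Set (Euc n)}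
    (hs : IsOpen s) (hf : ContDiffOn ℝ m f s) (hm : 1 ≤ m) {x : Euc n} (hx : x ∈ s) :
    DifferentiableAt ℝ f x :=
  (hf.contDiffAt (hs.mem_nhds hx)).differentiableAt (zero_lt_one.trans_le hm).ne'

lemma contDiffOn_pd {m : ℕ} {f : Euc n → ℝ} {s : Set (Euc n)} (hs : IsOpen s)
    (hf : ContDiffOn ℝ (m + 1 : ℕ) f s) (i : Fin n) :
    ContDiffOn ℝ (m : ℕ) (pd i f) s := by
  have hf' : ContDiffOn ℝ ((m : WithTop ℕ∞) + 1) f s := by exact_mod_cast hf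
  have h := ((contDiffOn_succ_iff_fderiv_of_isOpen hs).mp hf').2.2
  exact h.clm_apply contDiffOn_const

lemma pd_pd_eq_fderiv2 {u : Euc n → ℝ} {x : Euc n}
    (hfd : DifferentiableAt ℝ (fderiv ℝ u) x) (i j : Fin n) :
    pd i (pd j u) x
      = fderiv ℝ (fderiv ℝ u) x (EuclideanSpace.single i 1) (EuclideanSpace.single j 1) := by
  have h := ((ContinuousLinearMap.apply ℝ ℝ
      (EuclideanSpace.single j (1:ℝ))).hasFDerivAt.comp x hfd.hasFDerivAt).fderiv
  have h2 : pd i (pd j u) x = (fderiv ℝ (⇑(ContinuousLinearMap.apply ℝ ℝ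
      (EuclideanSpace.single j (1:ℝ))) ∘ fderiv ℝ u) x) (EuclideanSpace.single i 1) := rfl
  rw [h2, h]
  rfl

lemma pd_symm {f : Euc n → ℝ} {s : Set (Euc n)} {m : WithTop ℕ∞} (hs : IsOpen s)
    (hf : ContDiffOn ℝ m f s) (hm : 2 ≤ m) {x : Euc n} (hx : x ∈ s) (i j : Fin n) :
    pd i (pd j f) x = pd j (pd i f) x := by
  have hca := hf.contDiffAt (hs.mem_nhds hx)
  have hsym := hca.isSymmSndFDerivAt (by simpa using hm)
  have hfd : DifferentiableAt ℝ (fderiv ℝ f) x := by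
    have := hca.fderiv_right (m := 1) (by
      calc (1:WithTop ℕ∞) + 1 = 2 := by norm_num
        _ ≤ m := hm)
    exact this.differentiableAt one_ne_zero
  rw [pd_pd_eq_fderiv2 hfd, pd_pd_eq_fderiv2 hfd, hsym]

lemma pd_mul {f g : Euc n → ℝ} {x : Euc n} (hf : DifferentiableAt ℝ f x)
    (hg : DifferentiableAt ℝ g x) (i : Fin n) :
    pd i (fun z => f z * g z) x = pd i f x * g x + f x * pd i g x := by
  unfold pd
  rw [fderiv_fun_mul hf hg]
  simp only [ContinuousLinearMap.add_apply, ContinuousLinearMap.smul_apply, smul_eq_mul]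
  ring

lemma pd_sum {ι : Type*} (t : Finset ι) {f : ι → Euc n → ℝ} {x : Euc n}
    (h : ∀ a ∈ t, DifferentiableAt ℝ (f a) x) (i : Fin n) :
    pd i (fun z => ∑ a ∈ t, f a z) x = ∑ a ∈ t, pd i (f a) x := by
  unfold pd
  rw [fderiv_fun_sum h]
  simp

lemma pd_neg {f : Euc n → ℝ} {x : Euc n} (i : Fin n) :
    pd i (fun z => -f z) x = -pd i f x := by
  unfold pd
  rw [fderiv_fun_neg]
  simp

noncomputable def dualize (n : ℕ) : (Euc n →L[ℝ] ℝ) →L[ℝ] Euc n :=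
  ((EuclideanSpace.equiv (Fin n) ℝ).symm : (Fin n → ℝ) →L[ℝ] Euc n).comp
    (ContinuousLinearMap.pi fun i => ContinuousLinearMap.apply ℝ ℝ (EuclideanSpace.single i 1))

lemma dualize_coord (ℓ : Euc n →L[ℝ] ℝ) (k : Fin n) :
    dualize n ℓ k = ℓ (EuclideanSpace.single k 1) := rfl

lemma gradient_eq_dualize (u : Euc n → ℝ) :
    gradient u = fun z => dualize n (fderiv ℝ u z) := by
  funext z
  ext k
  rw [dualize_coord]
  exact gradient_coord u z k

lemma pd_comp_gradient {u φ : Euc n → ℝ} {s : Set (Euc n)} {m : WithTop ℕ∞} (hs : IsOpen s)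
    (hu : ContDiffOn ℝ m u s) (hm : 2 ≤ m) {x : Euc n} (hx : x ∈ s)
    (hφ : DifferentiableAt ℝ φ (gradient u x)) (j : Fin n) :
    pd j (fun z => φ (gradient u z)) x
      = ∑ k, Hess u x j k * pd k φ (gradient u x) := by
  have hfd : DifferentiableAt ℝ (fderiv ℝ u) x := by
    have := (hu.contDiffAt (hs.mem_nhds hx)).fderiv_right (m := 1) (by
      calc (1:WithTop ℕ∞) + 1 = 2 := by norm_num
        _ ≤ m := hm)
    exact this.differentiableAt one_ne_zero
  have hgrad : HasFDerivAt (gradient u)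
      ((dualize n).comp (fderiv ℝ (fderiv ℝ u) x)) x := by
    rw [gradient_eq_dualize u]
    exact (dualize n).hasFDerivAt.comp x hfd.hasFDerivAt
  have hcomp : HasFDerivAt (fun z => φ (gradient u z))
      ((fderiv ℝ φ (gradient u x)).comp
        ((dualize n).comp (fderiv ℝ (fderiv ℝ u) x))) x :=
    hφ.hasFDerivAt.comp x hgrad
  have e1 : pd j (fun z => φ (gradient u z)) x
      = fderiv ℝ φ (gradient u x) (dualize n (fderiv ℝ (fderiv ℝ u) x
          (EuclideanSpace.single j 1))) := by
    unfold pd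
    rw [hcomp.fderiv]
    rfl
  rw [e1, clm_eval_sum]
  refine Finset.sum_congr rfl fun k _ => ?_
  congr 1
  rw [dualize_coord]
  exact (pd_pd_eq_fderiv2 hfd j k).symm

noncomputable def detCM (n : ℕ) : ContinuousMultilinearMap ℝ (fun _ : Fin n => (Fin n → ℝ)) ℝ :=
  { (Matrix.detRowAlternating : (Fin n → ℝ) [⋀^Fin n]→ₗ[ℝ] ℝ).toMultilinearMap with
    cont := by
      show Continuous fun M : Fin n → Fin n → ℝ => (Matrix.of M).det
      simp only [Matrix.det_apply']
      refine continuous_finset_sum _ fun σ _ => ?_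
      refine Continuous.mul continuous_const ?_
      exact continuous_finset_prod _ fun i _ =>
        (continuous_apply i).comp (continuous_apply (σ i)) }

lemma det_row_expand (M : Matrix (Fin n) (Fin n) ℝ) (p : Fin n) (r : Fin n → ℝ) :
    (M.updateRow p r).det = ∑ q, M.adjugate q p * r q := by
  rw [← Matrix.cramer_transpose_apply, Matrix.cramer_eq_adjugate_mulVec]
  rw [← Matrix.adjugate_transpose]
  simp [Matrix.mulVec, dotProduct, Matrix.transpose_apply]

lemma hasFDerivAt_det_comp {A : Euc n → Matrix (Fin n) (Fin n) ℝ}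
    {A' : Fin n → Fin n → (Euc n →L[ℝ] ℝ)} {x : Euc n}
    (hA : ∀ p q, HasFDerivAt (fun z => A z p q) (A' p q) x) :
    HasFDerivAt (fun z => (A z).det)
      (∑ p, ∑ q, (A x).adjugate q p • A' p q) x := by
  have hA2 : HasFDerivAt (fun z (p : Fin n) => (A z p : Fin n → ℝ))
      (ContinuousLinearMap.pi fun p => ContinuousLinearMap.pi fun q => A' p q) x :=
    hasFDerivAt_pi.2 fun p => hasFDerivAt_pi.2 fun q => hA p q
  have h := ((detCM n).hasFDerivAt (fun p => A x p)).comp x hA2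
  have hfun : (⇑(detCM n) ∘ fun z (p : Fin n) => (A z p : Fin n → ℝ))
      = fun z => (A z).det := rfl
  rw [hfun] at h
  refine h.congr_fderiv (Eq.symm ?_)
  ext v
  rw [ContinuousLinearMap.comp_apply, ContinuousMultilinearMap.linearDeriv_apply]
  have key : ∀ p, (detCM n) (Function.update (fun p' => (A x p' : Fin n → ℝ)) p
      ((ContinuousLinearMap.pi fun q => A' p q) v))
      = ∑ q, (A x).adjugate q p * A' p q v := by
    intro p
    have h1 : (detCM n) (Function.update (fun p' => (A x p' : Fin n → ℝ)) p
        ((ContinuousLinearMap.pi fun q => A' p q) v))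
        = ((A x).updateRow p (fun q => A' p q v)).det := rfl
    rw [h1, det_row_expand]
  simp only [ContinuousLinearMap.pi_apply]
  rw [Finset.sum_congr rfl fun p _ => key p]
  simp only [ContinuousLinearMap.sum_apply, ContinuousLinearMap.smul_apply, smul_eq_mul]

lemma pd_det {A : Euc n → Matrix (Fin n) (Fin n) ℝ} {x : Euc n}
    (hA : ∀ p q, DifferentiableAt ℝ (fun z => A z p q) x) (i : Fin n) :
    pd i (fun z => (A z).det) x
      = ∑ p, ∑ q, (A x).adjugate q p * pd i (fun z => A z p q) x := by
  have h := (hasFDerivAt_det_comp (fun p q => (hA p q).hasFDerivAt)).fderiv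
  unfold pd
  rw [h]
  simp only [ContinuousLinearMap.sum_apply, ContinuousLinearMap.smul_apply, smul_eq_mul]

lemma contDiffOn_finset_prod {ι : Type*} {m : WithTop ℕ∞} {s : Set (Euc n)}
    (t : Finset ι) (f : ι → Euc n → ℝ) (h : ∀ a ∈ t, ContDiffOn ℝ m (f a) s) :
    ContDiffOn ℝ m (fun z => ∏ a ∈ t, f a z) s := by
  classical
  induction t using Finset.induction_on with
  | empty => simpa using contDiffOn_const
  | insert a t' hnotmem ih =>
    simp only [Finset.prod_insert hnotmem]
    exact (h a (Finset.mem_insert_self a t')).mul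
      (ih fun b hb => h b (Finset.mem_insert_of_mem hb))

lemma contDiffOn_det {m : WithTop ℕ∞} {A : Euc n → Matrix (Fin n) (Fin n) ℝ}
    {s : Set (Euc n)} (hA : ∀ p q, ContDiffOn ℝ m (fun z => A z p q) s) :
    ContDiffOn ℝ m (fun z => (A z).det) s := by
  have h : (fun z => (A z).det) = fun z => ∑ σ : Equiv.Perm (Fin n),
      ((Equiv.Perm.sign σ : ℤ) : ℝ) * ∏ i, A z (σ i) i := by
    funext z; rw [Matrix.det_apply']
  rw [h]
  refine ContDiffOn.sum fun σ _ => ?_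
  exact contDiffOn_const.mul (contDiffOn_finset_prod _ _ fun i _ => hA (σ i) i)

lemma contDiffOn_adjugate {m : WithTop ℕ∞} {A : Euc n → Matrix (Fin n) (Fin n) ℝ}
    {s : Set (Euc n)} (hA : ∀ p q, ContDiffOn ℝ m (fun z => A z p q) s) (p q : Fin n) :
    ContDiffOn ℝ m (fun z => (A z).adjugate p q) s := by
  simp only [Matrix.adjugate_apply]
  refine contDiffOn_det fun a b => ?_
  rcases eq_or_ne a q with rfl | hne
  · simp only [Matrix.updateRow_self]
    exact contDiffOn_const
  · simp only [Matrix.updateRow_ne hne]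
    exact hA a b

lemma contDiffOn_inv_entry {m : WithTop ℕ∞} {A : Euc n → Matrix (Fin n) (Fin n) ℝ}
    {s : Set (Euc n)} (hA : ∀ p q, ContDiffOn ℝ m (fun z => A z p q) s)
    (hdet : ∀ z ∈ s, (A z).det ≠ 0) (p q : Fin n) :
    ContDiffOn ℝ m (fun z => (A z)⁻¹ p q) s := by
  have h : (fun z => (A z)⁻¹ p q) = fun z => ((A z).det)⁻¹ * (A z).adjugate p q := by
    funext z
    rw [Matrix.inv_def, Matrix.smul_apply, Ring.inverse_eq_inv', smul_eq_mul]
  rw [h]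
  exact ((contDiffOn_det hA).inv hdet).mul (contDiffOn_adjugate hA p q)

lemma pd_const {x : Euc n} (i : Fin n) (c : ℝ) : pd i (fun _ => c) x = 0 := by
  unfold pd
  rw [fderiv_fun_const]
  simp

lemma pd_inv_entry {A : Euc n → Matrix (Fin n) (Fin n) ℝ} {s : Set (Euc n)} (hs : IsOpen s)
    (hA1 : ∀ p q, ContDiffOn ℝ 1 (fun z => A z p q) s)
    (hdet : ∀ z ∈ s, IsUnit (A z).det) {x : Euc n} (hx : x ∈ s) (i p t : Fin n) :
    pd i (fun z => (A z)⁻¹ p t) x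
      = -∑ m, ∑ q, (A x)⁻¹ p m * pd i (fun z => A z m q) x * (A x)⁻¹ q t := by
  have hdet' : ∀ z ∈ s, (A z).det ≠ 0 := fun z hz => (hdet z hz).ne_zero
  have hNd : ∀ a b, DifferentiableAt ℝ (fun z => (A z)⁻¹ a b) x := fun a b =>
    diffAt_of_contDiffOn hs (contDiffOn_inv_entry hA1 hdet' a b) le_rfl hx
  have hAd : ∀ a b, DifferentiableAt ℝ (fun z => A z a b) x := fun a b =>
    diffAt_of_contDiffOn hs (hA1 a b) le_rfl hx
  have hrow : ∀ q, ∀ z ∈ s, (∑ m, (A z)⁻¹ p m * A z m q)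
      = (fun _ => if p = q then (1:ℝ) else 0) z := by
    intro q z hz
    have h1 := Matrix.nonsing_inv_mul (A z) (hdet z hz)
    have h2 := congrFun (congrFun h1 p) q
    rw [Matrix.mul_apply] at h2
    rw [h2, Matrix.one_apply]
  have hzero : ∀ q, (∑ m, pd i (fun z => (A z)⁻¹ p m) x * A x m q)
      + (∑ m, (A x)⁻¹ p m * pd i (fun z => A z m q) x) = 0 := by
    intro q
    have h0 : pd i (fun z => ∑ m, (A z)⁻¹ p m * A z m q) x = 0 := by
      rw [pd_congr hs (hrow q) hx i, pd_const]
    rw [pd_sum Finset.univ (fun m hm => (hNd p m).fun_mul (hAd m q)) i] at h0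
    rw [Finset.sum_congr rfl (fun m _ => pd_mul (hNd p m) (hAd m q) i)] at h0
    rw [Finset.sum_add_distrib] at h0
    exact h0
  have hAN : ∀ m, (∑ q, A x m q * (A x)⁻¹ q t) = if m = t then (1:ℝ) else 0 := by
    intro m
    have h1 := Matrix.mul_nonsing_inv (A x) (hdet x hx)
    have h2 := congrFun (congrFun h1 m) t
    rw [Matrix.mul_apply] at h2
    rw [h2, Matrix.one_apply]
  have key : ∑ q, ((∑ m, pd i (fun z => (A z)⁻¹ p m) x * A x m q)
      + (∑ m, (A x)⁻¹ p m * pd i (fun z => A z m q) x)) * (A x)⁻¹ q t = 0 := by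
    simp only [hzero, zero_mul, Finset.sum_const_zero]
  have expand : ∑ q, (∑ m, pd i (fun z => (A z)⁻¹ p m) x * A x m q) * (A x)⁻¹ q t
      = pd i (fun z => (A z)⁻¹ p t) x := by
    rw [Finset.sum_congr rfl (fun q _ => Finset.sum_mul ..)]
    rw [Finset.sum_comm]
    have : ∀ m, ∑ q, pd i (fun z => (A z)⁻¹ p m) x * A x m q * (A x)⁻¹ q t
        = pd i (fun z => (A z)⁻¹ p m) x * ∑ q, A x m q * (A x)⁻¹ q t := by
      intro m
      rw [Finset.mul_sum]
      exact Finset.sum_congr rfl fun q _ => by ring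
    rw [Finset.sum_congr rfl fun m _ => this m]
    simp only [hAN]
    simp
  rw [Finset.sum_congr rfl (fun q _ => add_mul ..), Finset.sum_add_distrib, expand] at key
  have : ∑ q, (∑ m, (A x)⁻¹ p m * pd i (fun z => A z m q) x) * (A x)⁻¹ q t
      = ∑ m, ∑ q, (A x)⁻¹ p m * pd i (fun z => A z m q) x * (A x)⁻¹ q t := by
    rw [Finset.sum_comm]
    exact Finset.sum_congr rfl fun m _ => by rw [Finset.sum_mul]
  rw [this] at key
  linarith [key]

lemma div_free {u : Euc n → ℝ} {s : Set (Euc n)} (hs : IsOpen s)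
    (hu : ContDiffOn ℝ 4 u s) (hpos : ∀ z ∈ s, (Hess u z).PosDef)
    {x : Euc n} (hx : x ∈ s) (j : Fin n) :
    ∑ k, pd k (fun z => (Hess u z).det * (Hess u z)⁻¹ j k) x = 0 := by
  have h43 : ContDiffOn ℝ ((3:ℕ) + 1 : ℕ) u s := by exact_mod_cast hu
  have hpd3 : ∀ q, ContDiffOn ℝ ((2:ℕ)+1 : ℕ) (pd q u) s := by
    intro q
    exact_mod_cast contDiffOn_pd hs h43 q
  have hA2 : ∀ p q, ContDiffOn ℝ (2:ℕ) (fun z => Hess u z p q) s := by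
    intro p q
    have := contDiffOn_pd hs (hpd3 q) p
    exact this
  have hA1 : ∀ p q, ContDiffOn ℝ 1 (fun z => Hess u z p q) s := by
    intro p q
    exact (hA2 p q).of_le (by norm_num)
  have hdet : ∀ z ∈ s, IsUnit (Hess u z).det := fun z hz =>
    isUnit_iff_ne_zero.mpr (hpos z hz).det_pos.ne'
  have hdet' : ∀ z ∈ s, (Hess u z).det ≠ 0 := fun z hz => (hdet z hz).ne_zero
  have hAd : ∀ a b, DifferentiableAt ℝ (fun z => Hess u z a b) x := fun a b =>
    diffAt_of_contDiffOn hs (hA1 a b) le_rfl hx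
  have hdd : DifferentiableAt ℝ (fun z => (Hess u z).det) x :=
    diffAt_of_contDiffOn hs (contDiffOn_det hA1) le_rfl hx
  have hNd : ∀ a b, DifferentiableAt ℝ (fun z => (Hess u z)⁻¹ a b) x := fun a b =>
    diffAt_of_contDiffOn hs (contDiffOn_inv_entry hA1 hdet' a b) le_rfl hx
  set N : Matrix (Fin n) (Fin n) ℝ := (Hess u x)⁻¹ with hN
  set d : ℝ := (Hess u x).det with hd
  set T : Fin n → Fin n → Fin n → ℝ := fun i p q => pd i (fun z => Hess u z p q) x with hT
  -- adjugate entries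
  have hadj : ∀ a b, (Hess u x).adjugate a b = d * N a b := by
    intro a b
    have h1 := congrFun (congrFun (Matrix.inv_def (Hess u x)) a) b
    rw [Matrix.smul_apply, Ring.inverse_eq_inv', smul_eq_mul] at h1
    rw [← hN] at h1
    rw [h1, ← hd]
    field_simp [hdet' x hx]
    rw [mul_div_assoc, div_self (hdet' x hx), mul_one]
  -- Jacobi
  have hjac : ∀ k, pd k (fun z => (Hess u z).det) x = ∑ p, ∑ q, d * N q p * T k p q := by
    intro k
    rw [pd_det hAd k]
    exact Finset.sum_congr rfl fun p _ => Finset.sum_congr rfl fun q _ => by rw [hadj]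
  -- inverse derivative
  have hinvd : ∀ k, pd k (fun z => (Hess u z)⁻¹ j k) x
      = -∑ m, ∑ q, N j m * T k m q * N q k := fun k =>
    pd_inv_entry hs hA1 hdet hx k j k
  -- symmetry of T in first two arguments
  have hTsym : ∀ a b q, T a b q = T b a q := by
    intro a b q
    exact pd_symm hs (hpd3 q) (by norm_num) hx a b
  -- expand the divergence
  have hexp : ∀ k, pd k (fun z => (Hess u z).det * (Hess u z)⁻¹ j k) x
      = (∑ p, ∑ q, d * N q p * T k p q) * N j k
        + d * -∑ m, ∑ q, N j m * T k m q * N q k := by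
    intro k
    rw [pd_mul hdd (hNd j k) k, hjac k, hinvd k]
  rw [Finset.sum_congr rfl fun k _ => hexp k, Finset.sum_add_distrib]
  have h1 : ∑ k, (∑ p, ∑ q, d * N q p * T k p q) * N j k
      = d * ∑ k, ∑ p, ∑ q, N q p * T k p q * N j k := by
    rw [Finset.mul_sum]
    refine Finset.sum_congr rfl fun k _ => ?_
    rw [Finset.sum_mul, Finset.mul_sum]
    refine Finset.sum_congr rfl fun p _ => ?_
    rw [Finset.sum_mul, Finset.mul_sum]
    exact Finset.sum_congr rfl fun q _ => by ring
  have h2 : ∑ k, d * -∑ m, ∑ q, N j m * T k m q * N q k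
      = -(d * ∑ k, ∑ m, ∑ q, N j m * T k m q * N q k) := by
    rw [Finset.mul_sum]
    rw [← Finset.sum_neg_distrib]
    exact Finset.sum_congr rfl fun k _ => by ring
  rw [h1, h2]
  have key : ∑ k, ∑ p, ∑ q, N q p * T k p q * N j k
      = ∑ k, ∑ m, ∑ q, N j m * T k m q * N q k := by
    rw [Finset.sum_comm]
    refine Finset.sum_congr rfl fun a _ => Finset.sum_congr rfl fun b _ =>
      Finset.sum_congr rfl fun q _ => ?_
    rw [hTsym b a q]
    ring
  rw [key]
  ring

lemma pd_scalar_comp {g : Euc n → ℝ} {φ : ℝ → ℝ} {x : Euc n}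
    (hg : DifferentiableAt ℝ g x) (hφ : DifferentiableAt ℝ φ (g x)) (i : Fin n) :
    pd i (fun z => φ (g z)) x = deriv φ (g x) * pd i g x := by
  have hc := hφ.hasDerivAt.comp_hasFDerivAt x hg.hasFDerivAt
  unfold pd
  rw [show (fun z => φ (g z)) = φ ∘ g from rfl, hc.fderiv]
  simp

lemma hess_entries_cd2 {v : Euc n → ℝ} {s : Set (Euc n)} (hs : IsOpen s)
    (hv : ContDiffOn ℝ 4 v s) (p q : Fin n) :
    ContDiffOn ℝ (2:ℕ) (fun z => Hess v z p q) s := by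
  have h43 : ContDiffOn ℝ ((3:ℕ) + 1 : ℕ) v s := by exact_mod_cast hv
  have hpd3 : ContDiffOn ℝ ((2:ℕ)+1 : ℕ) (pd q v) s := by
    exact_mod_cast contDiffOn_pd hs h43 q
  exact contDiffOn_pd hs hpd3 p

lemma main1 {v vs : Euc n → ℝ} {s ss : Set (Euc n)} (hs : IsOpen s) (hss : IsOpen ss)
    (hv : ContDiffOn ℝ 4 v s) (hvs : ContDiffOn ℝ 4 vs ss)
    (hposv : ∀ z ∈ s, (Hess v z).PosDef) (hposs : ∀ z ∈ ss, (Hess vs z).PosDef)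
    (hmapv : ∀ z ∈ s, gradient v z ∈ ss)
    (hHinv : ∀ z ∈ s, Hess vs (gradient v z) = (Hess v z)⁻¹)
    (Φ Ψ : ℝ → ℝ)
    (hΦ : ∀ t : ℝ, 0 < t → DifferentiableAt ℝ Φ t)
    (hΨ : ∀ t : ℝ, 0 < t → DifferentiableAt ℝ Ψ t)
    (hrel : ∀ t : ℝ, 0 < t → deriv Ψ t = -t * deriv Φ t)
    {x : Euc n} (hx : x ∈ s) (j : Fin n) :
    pd j (fun z => Φ ((Hess v z).det)) x
      = -∑ k, pd k (fun y' => Ψ (((Hess vs y').det)⁻¹)) (gradient v x)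
          * ((Hess vs (gradient v x)).det * (Hess vs (gradient v x))⁻¹ k j) := by
  set y := gradient v x with hy_def
  have hy : y ∈ ss := hmapv x hx
  set dv : Euc n → ℝ := fun z => (Hess v z).det with hdv_def
  set dsf : Euc n → ℝ := fun z => (Hess vs z).det with hdsf_def
  have hA1v : ∀ p q, ContDiffOn ℝ 1 (fun z => Hess v z p q) s := fun p q =>
    (hess_entries_cd2 hs hv p q).of_le (by norm_num)
  have hA1s : ∀ p q, ContDiffOn ℝ 1 (fun z => Hess vs z p q) ss := fun p q =>
    (hess_entries_cd2 hss hvs p q).of_le (by norm_num)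
  have hdvx : DifferentiableAt ℝ dv x :=
    diffAt_of_contDiffOn hs (contDiffOn_det hA1v) le_rfl hx
  have hdsy : DifferentiableAt ℝ dsf y :=
    diffAt_of_contDiffOn hss (contDiffOn_det hA1s) le_rfl hy
  have hdpos : 0 < dv x := (hposv x hx).det_pos
  have hdspos : 0 < dsf y := (hposs y hy).det_pos
  set e : Euc n → ℝ := fun z => (dsf z)⁻¹ with he_def
  have he_d : DifferentiableAt ℝ e y := hdsy.inv hdspos.ne'
  have hdet_unit : ∀ z ∈ s, IsUnit (Hess v z).det := fun z hz =>
    isUnit_iff_ne_zero.mpr (hposv z hz).det_pos.ne'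
  have he_vals : ∀ z ∈ s, e (gradient v z) = dv z := by
    intro z hz
    show ((Hess vs (gradient v z)).det)⁻¹ = dv z
    rw [hHinv z hz, Matrix.det_nonsing_inv, Ring.inverse_eq_inv', inv_inv]
  have he_y : e y = dv x := he_vals x hx
  -- LHS
  have hL : pd j (fun z => Φ (dv z)) x = deriv Φ (dv x) * pd j dv x :=
    pd_scalar_comp hdvx (hΦ _ hdpos) j
  -- RHS inner derivatives
  have hR : ∀ k, pd k (fun y' => Ψ ((dsf y')⁻¹)) y = deriv Ψ (e y) * pd k e y := by
    intro k
    have := pd_scalar_comp (g := e) (φ := Ψ) he_d (by rw [he_y]; exact hΨ _ hdpos) k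
    exact this
  -- chain rule identity
  have hchain : pd j dv x = ∑ k, Hess v x j k * pd k e y := by
    have h1 : pd j dv x = pd j (fun z => e (gradient v z)) x :=
      pd_congr hs (fun z hz => (he_vals z hz).symm) hx j
    rw [h1]
    exact pd_comp_gradient hs hv (by norm_num) hx he_d j
  -- matrix algebra at the point
  have hB : Hess vs y = (Hess v x)⁻¹ := hHinv x hx
  have hBdet : dsf y = (dv x)⁻¹ := by
    show (Hess vs y).det = (dv x)⁻¹
    rw [hB, Matrix.det_nonsing_inv, Ring.inverse_eq_inv']
  have hBinv : (Hess vs y)⁻¹ = Hess v x := by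
    rw [hB, Matrix.nonsing_inv_nonsing_inv _ (hdet_unit x hx)]
  have hAsym : ∀ k, Hess v x k j = Hess v x j k := fun k =>
    pd_symm hs hv (by norm_num) hx k j
  have hRHS : -∑ k, pd k (fun y' => Ψ (((Hess vs y').det)⁻¹)) y
      * ((Hess vs y).det * (Hess vs y)⁻¹ k j)
      = -(deriv Ψ (dv x) * (dv x)⁻¹) * ∑ k, Hess v x j k * pd k e y := by
    have hterm : ∀ k, pd k (fun y' => Ψ (((Hess vs y').det)⁻¹)) y
        * ((Hess vs y).det * (Hess vs y)⁻¹ k j)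
        = (deriv Ψ (dv x) * (dv x)⁻¹) * (Hess v x j k * pd k e y) := by
      intro k
      have hdet2 : (Hess vs y).det = (dv x)⁻¹ := hBdet
      rw [hR k, he_y, hBinv, hdet2, hAsym k]
      ring
    rw [Finset.sum_congr rfl fun k _ => hterm k, ← Finset.mul_sum, neg_mul]
  rw [hRHS, hL, hchain]
  rw [hrel _ hdpos]
  field_simp

lemma cof_apply' (M : Matrix (Fin n) (Fin n) ℝ) (a b : Fin n) :
    (M.det • M⁻¹) a b = M.det * M⁻¹ a b := by
  rw [Matrix.smul_apply, smul_eq_mul]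

section FinalG

variable (G : ℝ → ℝ)

lemma G_facts (hG : ContDiff ℝ (⊤ : ℕ∞) G) :
    Differentiable ℝ G ∧ Differentiable ℝ (deriv G) ∧ Differentiable ℝ (deriv (deriv G)) := by
  have h3 : ContDiff ℝ ((2:WithTop ℕ∞) + 1) G := hG.of_le (WithTop.coe_le_coe.mpr le_top)
  have h2 : ContDiff ℝ (2:WithTop ℕ∞) (deriv G) := (contDiff_succ_iff_deriv.mp h3).2.2
  have h2' : ContDiff ℝ ((1:WithTop ℕ∞) + 1) (deriv G) := by
    have e21 : ((1:WithTop ℕ∞) + 1) = 2 := by norm_num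
    rw [e21]; exact h2
  have h1 : ContDiff ℝ (1:WithTop ℕ∞) (deriv (deriv G)) := (contDiff_succ_iff_deriv.mp h2').2.2
  exact ⟨hG.differentiable (by simp), h2.differentiable (by norm_num),
    h1.differentiable (by norm_num)⟩

lemma pair1 (hG : ContDiff ℝ (⊤ : ℕ∞) G) :
    (∀ t : ℝ, 0 < t → DifferentiableAt ℝ (fun t => deriv G t) t)
    ∧ (∀ t : ℝ, 0 < t → DifferentiableAt ℝ (fun t => G t - t * deriv G t) t)
    ∧ (∀ t : ℝ, 0 < t → deriv (fun t => G t - t * deriv G t) t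
        = -t * deriv (fun t => deriv G t) t) := by
  obtain ⟨hG1, hG2, hG3⟩ := G_facts G hG
  refine ⟨fun t _ => hG2 t, fun t _ => (hG1 t).sub (differentiableAt_id.mul (hG2 t)), ?_⟩
  intro t ht
  have h1 : HasDerivAt (fun t => G t - t * deriv G t)
      (deriv G t - (1 * deriv G t + t * deriv (deriv G) t)) t :=
    (hG1 t).hasDerivAt.sub ((hasDerivAt_id t).mul (hG2 t).hasDerivAt)
  rw [h1.deriv]
  have h2 : deriv (fun t => deriv G t) t = deriv (deriv G) t := rfl
  rw [h2]
  ring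

lemma pair2 (hG : ContDiff ℝ (⊤ : ℕ∞) G) :
    (∀ t : ℝ, 0 < t → DifferentiableAt ℝ
        (fun t : ℝ => G t⁻¹ - t⁻¹ * deriv G t⁻¹) t)
    ∧ (∀ t : ℝ, 0 < t → DifferentiableAt ℝ (fun t : ℝ => deriv G t⁻¹) t)
    ∧ (∀ t : ℝ, 0 < t → deriv (fun t : ℝ => deriv G t⁻¹) t
        = -t * deriv (fun t : ℝ => G t⁻¹ - t⁻¹ * deriv G t⁻¹) t) := by
  obtain ⟨hG1, hG2, hG3⟩ := G_facts G hG
  have hinv : ∀ t : ℝ, t ≠ 0 → HasDerivAt (fun y : ℝ => y⁻¹) (-(t ^ 2)⁻¹) t :=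
    fun t ht => hasDerivAt_inv ht
  have hD1 : ∀ t : ℝ, t ≠ 0 → HasDerivAt (fun t : ℝ => G t⁻¹)
      (deriv G t⁻¹ * -(t ^ 2)⁻¹) t := fun t ht =>
    ((hG1 t⁻¹).hasDerivAt.comp t (hinv t ht))
  have hD2 : ∀ t : ℝ, t ≠ 0 → HasDerivAt (fun t : ℝ => deriv G t⁻¹)
      (deriv (deriv G) t⁻¹ * -(t ^ 2)⁻¹) t := fun t ht =>
    ((hG2 t⁻¹).hasDerivAt.comp t (hinv t ht))
  have hD3 : ∀ t : ℝ, t ≠ 0 → HasDerivAt (fun t : ℝ => G t⁻¹ - t⁻¹ * deriv G t⁻¹)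
      ((deriv G t⁻¹ * -(t ^ 2)⁻¹)
        - (-(t ^ 2)⁻¹ * deriv G t⁻¹ + t⁻¹ * (deriv (deriv G) t⁻¹ * -(t ^ 2)⁻¹))) t :=
    fun t ht => (hD1 t ht).sub (((hinv t ht).mul (hD2 t ht)))
  refine ⟨fun t ht => (hD3 t ht.ne').differentiableAt,
    fun t ht => (hD2 t ht.ne').differentiableAt, ?_⟩
  intro t ht
  rw [(hD3 t ht.ne').deriv, (hD2 t ht.ne').deriv]
  field_simp
  ring

end FinalG

lemma inv_symm_entry {M : Matrix (Fin n) (Fin n) ℝ} (hsym : Mᵀ = M) (a b : Fin n) :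
    M⁻¹ a b = M⁻¹ b a := by
  have h := M.transpose_nonsing_inv
  rw [hsym] at h
  have h2 := congrFun (congrFun h b) a
  rw [Matrix.transpose_apply] at h2
  exact h2

/-- The Legendre transform `u*` of a uniformly convex function `u` satisfies the dual
equation: `∂w/∂x_j = -Σ_k ∂w*/∂y_k (U*)^{kj}` under `y = Du(x)`, and if
`Uⁱʲ wᵢⱼ = f` in `Ω` then `(U*)ⁱʲ w*ᵢⱼ = -f(Du*)·det D²u*` in `Ω* = Du(Ω)`. -/
theorem stmt_15 (n : ℕ) (hn : 2 ≤ n)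
    (Ω Ωs : Set (EuclideanSpace ℝ (Fin n))) (hΩ : IsOpen Ω) (hΩc : Convex ℝ Ω)
    (hΩs : IsOpen Ωs)
    (G : ℝ → ℝ) (hG : ContDiff ℝ (⊤ : ℕ∞) G)
    (u us f : EuclideanSpace ℝ (Fin n) → ℝ)
    (hu : ContDiffOn ℝ 4 u Ω) (hus : ContDiffOn ℝ 4 us Ωs)
    (hupos : ∀ x ∈ Ω, (Hess u x).PosDef)
    (huspos : ∀ y ∈ Ωs, (Hess us y).PosDef)
    (hmap : ∀ x ∈ Ω, gradient u x ∈ Ωs)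
    (hsurj : ∀ y ∈ Ωs, ∃ x ∈ Ω, gradient u x = y)
    (hleg : ∀ x ∈ Ω, us (gradient u x) = (inner ℝ x (gradient u x) : ℝ) - u x)
    (hinv : ∀ x ∈ Ω, gradient us (gradient u x) = x)
    (hHinv : ∀ x ∈ Ω, Hess us (gradient u x) = (Hess u x)⁻¹)
    (w ws : EuclideanSpace ℝ (Fin n) → ℝ)
    (hw : ∀ x, w x = deriv G ((Hess u x).det))
    (hws : ∀ y, ws y = G (((Hess us y).det)⁻¹)
      - ((Hess us y).det)⁻¹ * deriv G (((Hess us y).det)⁻¹)) :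
    (∀ x ∈ Ω, ∀ j : Fin n,
      fderiv ℝ w x (EuclideanSpace.single j (1:ℝ))
        = -∑ k, fderiv ℝ ws (gradient u x) (EuclideanSpace.single k (1:ℝ))
            * cof (Hess us (gradient u x)) k j) ∧
    ((∀ x ∈ Ω, ∑ i, ∑ j, cof (Hess u x) i j * Hess w x i j = f x) →
      ∀ y ∈ Ωs, ∑ i, ∑ j, cof (Hess us y) i j * Hess ws y i j
        = - f (gradient us y) * (Hess us y).det) := by
  simp only [cof]
  have hw1 : w = fun z => deriv G ((Hess u z).det) := funext hw
  have hws1 : ws = fun y' => G (((Hess us y').det)⁻¹)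
      - ((Hess us y').det)⁻¹ * deriv G (((Hess us y').det)⁻¹) := funext hws
  have hdetu : ∀ z ∈ Ω, IsUnit (Hess u z).det := fun z hz =>
    isUnit_iff_ne_zero.mpr (hupos z hz).det_pos.ne'
  have hdetus : ∀ z ∈ Ωs, IsUnit (Hess us z).det := fun z hz =>
    isUnit_iff_ne_zero.mpr (huspos z hz).det_pos.ne'
  have hdet'u : ∀ z ∈ Ω, (Hess u z).det ≠ 0 := fun z hz => (hdetu z hz).ne_zero
  obtain ⟨hΦ₁, hΨ₁, hrel₁⟩ := pair1 G hG
  obtain ⟨hΦ₂, hΨ₂, hrel₂⟩ := pair2 G hG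
  -- Part 1
  have part1 : ∀ x ∈ Ω, ∀ j : Fin n,
      fderiv ℝ w x (EuclideanSpace.single j (1:ℝ))
        = -∑ k, fderiv ℝ ws (gradient u x) (EuclideanSpace.single k (1:ℝ))
            * ((Hess us (gradient u x)).det • (Hess us (gradient u x))⁻¹) k j := by
    intro x hx j
    have hmain := main1 hΩ hΩs hu hus hupos huspos hmap hHinv
      (fun t => deriv G t) (fun t => G t - t * deriv G t) hΦ₁ hΨ₁ hrel₁ hx j
    rw [← hw1, ← hws1] at hmain
    show pd j w x = _
    rw [hmain]
    refine congrArg Neg.neg (Finset.sum_congr rfl fun k _ => ?_)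
    rw [cof_apply']
    rfl
  refine ⟨part1, ?_⟩
  -- Part 2
  intro hF y hy
  obtain ⟨x, hx, hgx⟩ := hsurj y hy
  have hx' : gradient us y = x := by rw [← hgx, hinv x hx]
  have hmaps : ∀ z ∈ Ωs, gradient us z ∈ Ω := by
    intro z hz
    obtain ⟨x', hx', hg'⟩ := hsurj z hz
    rw [← hg', hinv x' hx']
    exact hx'
  have hHinv2 : ∀ z ∈ Ωs, Hess u (gradient us z) = (Hess us z)⁻¹ := by
    intro z hz
    obtain ⟨x', hhx', hg'⟩ := hsurj z hz
    rw [← hg', hinv x' hhx', hHinv x' hhx',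
      Matrix.nonsing_inv_nonsing_inv _ (hdetu x' hhx')]
  have hw2 : w = fun z => deriv G ((((Hess u z).det)⁻¹)⁻¹) :=
    funext fun z => by rw [hw z, inv_inv]
  have hws2 : ws = fun z => G (((Hess us z).det)⁻¹)
      - ((Hess us z).det)⁻¹ * deriv G (((Hess us z).det)⁻¹) := hws1
  -- dual relation
  have hR : ∀ z ∈ Ωs, ∀ k, pd k ws z = -∑ j', pd j' w (gradient us z)
      * ((Hess u (gradient us z)).det * (Hess u (gradient us z))⁻¹ j' k) := by
    intro z hz k
    have hmain := main1 hΩs hΩ hus hu huspos hupos hmaps hHinv2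
      (fun t : ℝ => G t⁻¹ - t⁻¹ * deriv G t⁻¹) (fun t : ℝ => deriv G t⁻¹)
      hΦ₂ hΨ₂ hrel₂ hz k
    rw [← hws2, ← hw2] at hmain
    exact hmain
  -- smoothness on Ω
  have hA2u : ∀ p q, ContDiffOn ℝ (2:ℕ) (fun z => Hess u z p q) Ω :=
    hess_entries_cd2 hΩ hu
  have hA1u : ∀ p q, ContDiffOn ℝ 1 (fun z => Hess u z p q) Ω := fun p q =>
    (hA2u p q).of_le (by norm_num)
  have hwC2 : ContDiffOn ℝ (2:ℕ) w Ω := by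
    rw [hw1]
    have h3 : ContDiff ℝ ((2:WithTop ℕ∞) + 1) G := hG.of_le (WithTop.coe_le_coe.mpr le_top)
    have hdG : ContDiff ℝ (2:WithTop ℕ∞) (deriv G) := (contDiff_succ_iff_deriv.mp h3).2.2
    have hdet2 : ContDiffOn ℝ (2:ℕ) (fun z => (Hess u z).det) Ω := contDiffOn_det hA2u
    have := hdG.comp_contDiffOn (s := Ω) (by exact_mod_cast hdet2)
    exact_mod_cast this
  have hwC2' : ContDiffOn ℝ ((1:ℕ)+1:ℕ) w Ω := by exact_mod_cast hwC2
  have hpdw1 : ∀ j', ContDiffOn ℝ (1:ℕ) (pd j' w) Ω := fun j' => contDiffOn_pd hΩ hwC2' j'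
  have hpdwd : ∀ j', DifferentiableAt ℝ (pd j' w) x := fun j' =>
    diffAt_of_contDiffOn hΩ (hpdw1 j') (by norm_num) hx
  have hCfun : ∀ a b, ContDiffOn ℝ 1 (fun z => (Hess u z).det * (Hess u z)⁻¹ a b) Ω :=
    fun a b => (contDiffOn_det hA1u).mul (contDiffOn_inv_entry hA1u hdet'u a b)
  have hCd : ∀ a b, DifferentiableAt ℝ (fun z => (Hess u z).det * (Hess u z)⁻¹ a b) x :=
    fun a b => diffAt_of_contDiffOn hΩ (hCfun a b) le_rfl hx
  -- the functions φf
  set φf : Fin n → Euc n → ℝ := fun k x' => -∑ j', pd j' w x'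
      * ((Hess u x').det * (Hess u x')⁻¹ j' k) with hφf_def
  have hφd : ∀ k, DifferentiableAt ℝ (φf k) x := by
    intro k
    exact (DifferentiableAt.fun_sum fun j' _ => (hpdwd j').fun_mul (hCd j' k)).neg
  have hsecond : ∀ i k, pd i (pd k ws) y = ∑ l, Hess us y i l * pd l (φf k) x := by
    intro i k
    have h1 : pd i (pd k ws) y = pd i (fun z => φf k (gradient us z)) y := by
      refine pd_congr hΩs (fun z hz => ?_) hy i
      exact hR z hz k
    rw [h1, pd_comp_gradient hΩs hus (by norm_num) hy (by rw [hx']; exact hφd k) i, hx']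
  -- matrix algebra at the point
  have hBdef : Hess us y = (Hess u x)⁻¹ := by rw [← hgx]; exact hHinv x hx
  have hBinv : (Hess us y)⁻¹ = Hess u x := by
    rw [hBdef, Matrix.nonsing_inv_nonsing_inv _ (hdetu x hx)]
  have hAsym : ∀ a b, Hess u x a b = Hess u x b a := fun a b =>
    pd_symm hΩ hu (by norm_num) hx a b
  have hAT : (Hess u x)ᵀ = Hess u x := by
    ext a b
    rw [Matrix.transpose_apply]
    exact hAsym b a
  have hABkl : ∀ k l, (∑ i, Hess u x i k * Hess us y i l) = if k = l then (1:ℝ) else 0 := by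
    intro k l
    have hmul := congrFun (congrFun (Matrix.mul_nonsing_inv (Hess u x) (hdetu x hx)) k) l
    rw [Matrix.mul_apply] at hmul
    rw [Finset.sum_congr rfl fun i (_ : i ∈ Finset.univ) => by rw [hAsym i k, hBdef]]
    rw [hmul, Matrix.one_apply]
  -- contraction
  have hS : ∑ i, ∑ k, ((Hess us y).det • (Hess us y)⁻¹) i k * Hess ws y i k
      = (Hess us y).det * ∑ k, pd k (φf k) x := by
    have h1 : ∀ i k, ((Hess us y).det • (Hess us y)⁻¹) i k * Hess ws y i k
        = ∑ l, (Hess u x i k * Hess us y i l) * ((Hess us y).det * pd l (φf k) x) := by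
      intro i k
      have e1 : Hess ws y i k = pd i (pd k ws) y := rfl
      rw [e1, hsecond i k, cof_apply', hBinv, Finset.mul_sum]
      exact Finset.sum_congr rfl fun l _ => by ring
    rw [Finset.sum_congr rfl fun i (_ : i ∈ Finset.univ) =>
      Finset.sum_congr rfl fun k (_ : k ∈ Finset.univ) => h1 i k]
    rw [Finset.sum_comm]
    have h2 : ∀ k, (∑ i, ∑ l, (Hess u x i k * Hess us y i l)
        * ((Hess us y).det * pd l (φf k) x))
        = (Hess us y).det * pd k (φf k) x := by
      intro k
      rw [Finset.sum_comm]
      have h3 : ∀ l, (∑ i, (Hess u x i k * Hess us y i l)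
          * ((Hess us y).det * pd l (φf k) x))
          = (if k = l then (1:ℝ) else 0) * ((Hess us y).det * pd l (φf k) x) := by
        intro l
        rw [← Finset.sum_mul, hABkl k l]
      rw [Finset.sum_congr rfl fun l (_ : l ∈ Finset.univ) => h3 l]
      simp [Finset.sum_ite_eq, ite_mul]
    rw [Finset.sum_congr rfl fun k (_ : k ∈ Finset.univ) => h2 k, ← Finset.mul_sum]
  -- the divergence and the PDE
  have hdiv : ∀ j', ∑ k, pd k (fun z => (Hess u z).det * (Hess u z)⁻¹ j' k) x = 0 :=
    fun j' => div_free hΩ hu hupos hx j'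
  have hpdφ : ∀ k, pd k (φf k) x
      = -∑ j', (pd k (pd j' w) x * ((Hess u x).det * (Hess u x)⁻¹ j' k)
          + pd j' w x * pd k (fun z => (Hess u z).det * (Hess u z)⁻¹ j' k) x) := by
    intro k
    have e1 : φf k = fun x' => -∑ j', (fun j' => fun x' => pd j' w x'
        * ((Hess u x').det * (Hess u x')⁻¹ j' k)) j' x' := rfl
    rw [e1, pd_neg, pd_sum Finset.univ (fun j' _ => (hpdwd j').fun_mul (hCd j' k)) k]
    rw [Finset.sum_congr rfl fun j' (_ : j' ∈ Finset.univ) => pd_mul (hpdwd j') (hCd j' k) k]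
  have claimA : ∑ k, ∑ j', pd k (pd j' w) x * ((Hess u x).det * (Hess u x)⁻¹ j' k)
      = f x := by
    have hFx := hF x hx
    rw [← hFx]
    refine Finset.sum_congr rfl fun k _ => Finset.sum_congr rfl fun j' _ => ?_
    have e1 : Hess w x k j' = pd k (pd j' w) x := rfl
    rw [e1, cof_apply', inv_symm_entry hAT k j']
    ring
  have claimB : ∑ k, ∑ j', pd j' w x
      * pd k (fun z => (Hess u z).det * (Hess u z)⁻¹ j' k) x = 0 := by
    rw [Finset.sum_comm]
    refine Finset.sum_eq_zero fun j' _ => ?_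
    rw [← Finset.mul_sum, hdiv j', mul_zero]
  have hsum : ∑ k, pd k (φf k) x = -f x := by
    rw [Finset.sum_congr rfl fun k (_ : k ∈ Finset.univ) => hpdφ k]
    rw [Finset.sum_neg_distrib]
    rw [Finset.sum_congr rfl fun k (_ : k ∈ Finset.univ) =>
      (Finset.sum_add_distrib : ∑ j' : Fin n, _ = _)]
    rw [Finset.sum_add_distrib, claimA, claimB, add_zero]
  rw [hS, hsum, hx']
  ring
end
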